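/- arXiv:1709.09539 — 5 statements merged into one kernel-verified Lean document; each statement's English description precedes it below -/
import Mathlib

section
/- Let (X, μ) be a measure space and φ_1, …, φ_N measurable, nonnegative, integrable real-valued functions on X with ∑_{i=1}^{N} φ_i(x) = 1 for all x ∈ X and ∫_X φ_j dμ > 0 for every j, such that all products φ_i φ_j are integrable. Let u : X → ℝ be integrable with each u·φ_j integrable, and set π_j(u) = (∫_X u φ_j dμ)/(∫_X φ_j dμ). Then ∑_{i=1}^{N} |∑_{j=1}^{N} (∫_X φ_i φ_j dμ) · π_j(u)| ≤ ∫_X |u(x)| dμ(x). (This is the inequality ‖Π_h u‖_{\widetilde{L}^1_h} ≤ ‖u‖_{L¹} used in the proof of the main error estimate.) -/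
open MeasureTheory
open scoped BigOperators

/-- The approximate `L¹`-norm of the quasi-interpolant of an integrable function `u` is
bounded by the `L¹`-norm of `u`:
`∑_i |∑_j (∫ φ_i φ_j dμ) · π_j(u)| ≤ ∫ |u| dμ`, where `π_j(u) = (∫ u φ_j dμ)/(∫ φ_j dμ)`,
when the `φᵢ` are measurable, nonnegative, integrable, with positive integrals,
integrable pairwise products, and form a partition of unity. -/
theorem stmt_6 {X : Type*} [MeasurableSpace X] (μ : Measure X) (N : ℕ) (hN : 0 < N)
    (φ : Fin N → X → ℝ) (hmeas : ∀ i, Measurable (φ i)) (hpos : ∀ i x, 0 ≤ φ i x)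
    (hint : ∀ i, Integrable (φ i) μ) (hsum : ∀ x, ∑ i, φ i x = 1)
    (hintpos : ∀ j, 0 < ∫ x, φ j x ∂μ)
    (hprod : ∀ i j, Integrable (fun x => φ i x * φ j x) μ)
    (u : X → ℝ) (hu : Integrable u μ) (huφ : ∀ j, Integrable (fun x => u x * φ j x) μ) :
    ∑ i, |∑ j, (∫ x, φ i x * φ j x ∂μ) * ((∫ x, u x * φ j x ∂μ) / (∫ x, φ j x ∂μ))| ≤
      ∫ x, |u x| ∂μ := by
  set π : Fin N → ℝ := fun j => (∫ x, u x * φ j x ∂μ) / (∫ x, φ j x ∂μ) with hπ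
  have hann : ∀ i j, 0 ≤ ∫ x, φ i x * φ j x ∂μ := fun i j =>
    integral_nonneg (fun x => mul_nonneg (hpos i x) (hpos j x))
  have step1 : ∑ i, |∑ j, (∫ x, φ i x * φ j x ∂μ) * π j| ≤
      ∑ i, ∑ j, (∫ x, φ i x * φ j x ∂μ) * |π j| := by
    refine Finset.sum_le_sum fun i _ => ?_
    refine (Finset.abs_sum_le_sum_abs _ _).trans ?_
    refine Finset.sum_le_sum fun j _ => ?_
    rw [abs_mul, abs_of_nonneg (hann i j)]
  have step2 : ∀ j, ∑ i, ∫ x, φ i x * φ j x ∂μ = ∫ x, φ j x ∂μ := by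
    intro j
    rw [← integral_finset_sum _ (fun i _ => hprod i j)]
    congr 1; funext x
    rw [← Finset.sum_mul, hsum, one_mul]
  have step3 : ∀ j, |π j| * (∫ x, φ j x ∂μ) = |∫ x, u x * φ j x ∂μ| := by
    intro j
    rw [hπ, abs_div, abs_of_pos (hintpos j), div_mul_cancel₀]
    exact (hintpos j).ne'
  calc ∑ i, |∑ j, (∫ x, φ i x * φ j x ∂μ) * π j|
      ≤ ∑ i, ∑ j, (∫ x, φ i x * φ j x ∂μ) * |π j| := step1
    _ = ∑ j, |π j| * ∑ i, ∫ x, φ i x * φ j x ∂μ := by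
        rw [Finset.sum_comm]
        simp [Finset.mul_sum, mul_comm]
    _ = ∑ j, |∫ x, u x * φ j x ∂μ| := by
        refine Finset.sum_congr rfl fun j _ => ?_
        rw [step2 j, step3 j]
    _ ≤ ∑ j, ∫ x, |u x| * φ j x ∂μ := by
        refine Finset.sum_le_sum fun j _ => ?_
        calc |∫ x, u x * φ j x ∂μ| = ‖∫ x, u x * φ j x ∂μ‖ := (Real.norm_eq_abs _).symm
          _ ≤ ∫ x, ‖u x * φ j x‖ ∂μ := norm_integral_le_integral_norm _
          _ = ∫ x, |u x| * φ j x ∂μ := by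
              congr 1; funext x
              rw [Real.norm_eq_abs, abs_mul, abs_of_nonneg (hpos j x)]
    _ = ∫ x, |u x| ∂μ := by
        rw [← integral_finset_sum]
        · congr 1; funext x
          rw [← Finset.mul_sum, hsum, mul_one]
        · intro j _
          simp only [mul_comm]
          refine hu.abs.bdd_mul (c := 1) (hmeas j).aestronglyMeasurable (ae_of_all _ fun x => ?_)
          rw [Real.norm_eq_abs, abs_of_nonneg (hpos j x)]
          calc φ j x ≤ ∑ i, φ i x :=
                Finset.single_le_sum (fun i _ => hpos i x) (Finset.mem_univ j)
            _ = 1 := hsum x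
end

section
/- Let a ≤ 0 ≤ b be real numbers and α > 0, β > 0. For p ∈ ℝ define soft(p, β) = sign(p)·max(|p| − β, 0) and Π_{[a,b]}(t) = max(a, min(t, b)). Then a real number u with a ≤ u ≤ b satisfies the variational inequality (α u − p)(v − u) + β(|v| − |u|) ≥ 0 for all v ∈ [a, b] if and only if u = Π_{[a,b]}(soft(p, β)/α). In particular, if |p| ≤ β then u = 0. -/
lemma soft_zero (a b α β p : ℝ) (ha : a ≤ 0) (hb : 0 ≤ b) (hα : 0 < α)
    (hp : |p| ≤ β) : max a (min (Real.sign p * max (|p| - β) 0 / α) b) = 0 := by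
  have h0 : max (|p| - β) 0 = 0 := max_eq_right (by linarith)
  rw [h0, mul_zero, zero_div, min_eq_left hb, max_eq_right ha]

lemma soft_VI (a b α β p : ℝ) (ha : a ≤ 0) (hb : 0 ≤ b) (hα : 0 < α) (hβ : 0 < β) :
    ∀ v : ℝ, a ≤ v → v ≤ b →
      (α * (max a (min (Real.sign p * max (|p| - β) 0 / α) b)) - p) *
          (v - max a (min (Real.sign p * max (|p| - β) 0 / α) b)) +
        β * (|v| - |max a (min (Real.sign p * max (|p| - β) 0 / α) b)|) ≥ 0 := by
  intro v hva hvb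
  rcases le_or_gt (|p|) β with hp | hp
  · rw [soft_zero a b α β p ha hb hα hp]
    have h1 : p * v ≤ |p| * |v| := by
      calc p * v ≤ |p * v| := le_abs_self _
        _ = |p| * |v| := abs_mul p v
    have h2 : |p| * |v| ≤ β * |v| := by
      have := abs_nonneg v
      nlinarith
    simp only [abs_zero]
    nlinarith [abs_nonneg v]
  · set s : ℝ := Real.sign p * max (|p| - β) 0 / α with hs
    have hmax : max (|p| - β) 0 = |p| - β := max_eq_left (by linarith)
    rcases lt_trichotomy p 0 with hp0 | hp0 | hp0
    · -- p < 0, |p| = -p, sign = -1, s = -(-p - β)/α < 0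
      have habs : |p| = -p := abs_of_neg hp0
      have hsgn : Real.sign p = -1 := Real.sign_of_neg hp0
      have hαs : α * s = p + β := by
        rw [hs, hsgn, hmax, habs]; field_simp; ring
      have hsneg : s < 0 := by nlinarith [habs ▸ hp]
      have hmin : min s b = s := min_eq_left (by linarith)
      rw [hmin]
      rcases le_total a s with hc | hc
      · rw [max_eq_right hc, abs_of_nonpos (le_of_lt hsneg)]
        nlinarith [le_abs_self v, neg_abs_le v]
      · rw [max_eq_left hc, abs_of_nonpos ha]
        have h1 : α * a - p ≥ β := by nlinarith
        have h2 : v - a ≥ 0 := by linarith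
        nlinarith [neg_abs_le v]
    · rw [hp0] at hp; simp at hp; linarith
    · -- p > 0
      have habs : |p| = p := abs_of_pos hp0
      have hsgn : Real.sign p = 1 := Real.sign_of_pos hp0
      have hαs : α * s = p - β := by
        rw [hs, hsgn, hmax, habs]; field_simp
      have hspos : 0 < s := by nlinarith [habs ▸ hp]
      have hmax2 : max a (min s b) = min s b :=
        max_eq_right (le_trans ha (le_min (le_of_lt hspos) hb))
      rw [hmax2]
      rcases le_total s b with hc | hc
      · rw [min_eq_left hc, abs_of_nonneg (le_of_lt hspos)]
        nlinarith [le_abs_self v]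
      · rw [min_eq_right hc, abs_of_nonneg hb]
        have h1 : α * b - p ≤ -β := by nlinarith
        have h2 : v - b ≤ 0 := by linarith
        nlinarith [le_abs_self v]

/-- Scalar form of the equivalence between the first-order variational inequality and the
projection formula `u* = Π_{[a,b]}(soft(p*, β)/α)`: for `a ≤ 0 ≤ b`, `α, β > 0`, a number
`u ∈ [a, b]` satisfies `(αu − p)(v − u) + β(|v| − |u|) ≥ 0` for all `v ∈ [a, b]` iff
`u = max(a, min(sign(p)·max(|p| − β, 0)/α, b))`; in particular `|p| ≤ β` forces `u = 0`. -/
theorem stmt_8 (a b α β p u : ℝ) (ha : a ≤ 0) (hb : 0 ≤ b) (hα : 0 < α) (hβ : 0 < β)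
    (hua : a ≤ u) (hub : u ≤ b) :
    ((∀ v : ℝ, a ≤ v → v ≤ b → (α * u - p) * (v - u) + β * (|v| - |u|) ≥ 0) ↔
      u = max a (min (Real.sign p * max (|p| - β) 0 / α) b)) ∧
    (|p| ≤ β →
      (∀ v : ℝ, a ≤ v → v ≤ b → (α * u - p) * (v - u) + β * (|v| - |u|) ≥ 0) → u = 0) := by
  have hkey := soft_VI a b α β p ha hb hα hβ
  set w : ℝ := max a (min (Real.sign p * max (|p| - β) 0 / α) b) with hw
  have hwa : a ≤ w := le_max_left _ _
  have hwb : w ≤ b := max_le (le_trans ha hb) (min_le_right _ _)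
  have main : (∀ v : ℝ, a ≤ v → v ≤ b → (α * u - p) * (v - u) + β * (|v| - |u|) ≥ 0) → u = w := by
    intro hVI
    have h1 := hVI w hwa hwb
    have h2 := hkey u hua hub
    have h3 : α * (u - w) ^ 2 ≤ 0 := by nlinarith
    have h4 : (u - w) ^ 2 ≤ 0 := by nlinarith
    have h5 : (u - w) ^ 2 = 0 := le_antisymm h4 (sq_nonneg _)
    have := pow_eq_zero_iff (n := 2) (by norm_num) |>.mp h5
    linarith
  constructor
  · constructor
    · exact main
    · intro hu; rw [hu]; exact hkey
  · intro hp hVI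
    have := main hVI
    rw [this, hw, soft_zero a b α β p ha hb hα hp]
end

section
/- Let (Ω, μ) be a measure space, H = L²(Ω, μ; ℝ), T : H → H a continuous linear operator with Hilbert-space adjoint T*, and d ∈ H. Let α > 0 and β ≥ 0, and suppose that |(T* d)(x)| ≤ β for μ-almost every x ∈ Ω. Then for every u : Ω → ℝ that lies in L²(μ) and is integrable, ½‖T u − d‖²_{L²} + (α/2)‖u‖²_{L²} + β ∫_Ω |u| dμ ≥ ½‖d‖²_{L²}. (Hence if β ≥ β₀ := ‖T* d‖_{L^∞}, the reduced objective Ĵ(u) = ½‖T u − d‖²_{L²} + (α/2)‖u‖²_{L²} + β‖u‖_{L¹} attains its minimum at u = 0, which gives the optimal control u*_β = 0 for sufficiently large sparsity parameter β.) -/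
open MeasureTheory

/-- If `β ≥ ‖T* d‖_{L^∞}` (i.e. `|(T* d)(x)| ≤ β` a.e.), then the reduced sparse-control
objective `Ĵ(u) = ½‖T u − d‖² + (α/2)‖u‖² + β∫|u|` is at least `½‖d‖²` for every
square-integrable and integrable `u`; hence the minimum is attained at `u = 0`, i.e.
the optimal control is `u*_β = 0` for sufficiently large sparsity parameter `β`. -/
theorem stmt_9 {Ω : Type*} [MeasurableSpace Ω] (μ : Measure Ω)
    (T : Lp ℝ 2 μ →L[ℝ] Lp ℝ 2 μ) (d : Lp ℝ 2 μ) (α β : ℝ) (hα : 0 < α) (hβ : 0 ≤ β)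
    (hbound : ∀ᵐ x ∂μ, |(ContinuousLinearMap.adjoint T d : Ω → ℝ) x| ≤ β)
    (u : Lp ℝ 2 μ) (hu : Integrable (u : Ω → ℝ) μ) :
    (1 / 2) * ‖T u - d‖ ^ 2 + (α / 2) * ‖u‖ ^ 2 + β * ∫ x, |(u : Ω → ℝ) x| ∂μ ≥
      (1 / 2) * ‖d‖ ^ 2 := by
  set v := ContinuousLinearMap.adjoint T d with hv
  have hadj : (inner ℝ (T u) d : ℝ) = inner ℝ u v := by
    exact (ContinuousLinearMap.adjoint_inner_right T u d).symm
  have hinner : (inner ℝ u v : ℝ) = ∫ x, (u : Ω → ℝ) x * (v : Ω → ℝ) x ∂μ := by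
    rw [L2.inner_def]
    simp [mul_comm]
  have hintegrable : Integrable (fun x => (u : Ω → ℝ) x * (v : Ω → ℝ) x) μ :=
    by simpa [mul_comm] using L2.integrable_inner (𝕜 := ℝ) u v
  have habs : Integrable (fun x => β * |(u : Ω → ℝ) x|) μ := (hu.abs).const_mul β
  have hle : (inner ℝ u v : ℝ) ≤ β * ∫ x, |(u : Ω → ℝ) x| ∂μ := by
    rw [hinner]
    calc ∫ x, (u : Ω → ℝ) x * (v : Ω → ℝ) x ∂μ
        ≤ ∫ x, β * |(u : Ω → ℝ) x| ∂μ := by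
          refine integral_mono_ae hintegrable habs ?_
          filter_upwards [hbound] with x hx
          calc (u : Ω → ℝ) x * (v : Ω → ℝ) x ≤ |(u : Ω → ℝ) x * (v : Ω → ℝ) x| := le_abs_self _
            _ = |(u : Ω → ℝ) x| * |(v : Ω → ℝ) x| := abs_mul _ _
            _ ≤ |(u : Ω → ℝ) x| * β := by
                exact mul_le_mul_of_nonneg_left hx (abs_nonneg _)
            _ = β * |(u : Ω → ℝ) x| := mul_comm _ _
      _ = β * ∫ x, |(u : Ω → ℝ) x| ∂μ := integral_const_mul β _
  have hexp : ‖T u - d‖ ^ 2 = ‖T u‖ ^ 2 - 2 * inner ℝ (T u) d + ‖d‖ ^ 2 := by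
    rw [@norm_sub_sq_real]
  have h1 : (0:ℝ) ≤ ‖T u‖ ^ 2 := sq_nonneg _
  have h2 : (0:ℝ) ≤ ‖u‖ ^ 2 := sq_nonneg _
  rw [ge_iff_le]
  nlinarith [hle, hadj]
end

section
/- Let M and K be real symmetric positive definite n×n matrices, y_d, y_r ∈ ℝⁿ, a ≤ 0 ≤ b, and α, β > 0. Then for every primal-feasible pair (y, u) ∈ ℝⁿ × ℝⁿ (i.e. Ky = M(u + y_r) and a ≤ u_i ≤ b for all i) and every (λ, p, μ) ∈ ℝⁿ × ℝⁿ × ℝⁿ with |λ_i| ≤ β for all i, one has the weak duality inequality: ½‖y − y_d‖²_M + (α/2)‖u‖²_M + β‖Mu‖₁ ≥ −½‖Kp − M y_d‖²_{M⁻¹} − (1/(2α))‖λ + μ − p‖²_M − y_rᵀMp − ∑_{i=1}^{n} max(a (Mμ)_i, b (Mμ)_i) + ½‖y_d‖²_M. -/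
open Matrix
open scoped BigOperators

private lemma symm_dot {n : ℕ} {M : Matrix (Fin n) (Fin n) ℝ} (hM : M.IsSymm)
    (x z : Fin n → ℝ) : x ⬝ᵥ M.mulVec z = z ⬝ᵥ M.mulVec x := by
  rw [Matrix.dotProduct_mulVec, ← Matrix.mulVec_transpose, hM.eq, dotProduct_comm]

private lemma psd_dot {n : ℕ} {M : Matrix (Fin n) (Fin n) ℝ} (hM : M.PosSemidef)
    (x : Fin n → ℝ) : 0 ≤ x ⬝ᵥ M.mulVec x := by
  have := hM.re_dotProduct_nonneg x
  simpa using this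

/-- Weak duality for the discretized sparse optimal control problem: for any primal
feasible pair `(y, u)` (i.e. `Ky = M(u + y_r)`, `u ∈ [a,b]ⁿ`) and any dual variables
`(λ, p, μ)` with `‖λ‖_∞ ≤ β`, the primal objective dominates the dual objective. -/
theorem stmt_17 {n : ℕ} (M K : Matrix (Fin n) (Fin n) ℝ)
    (hMsymm : M.IsSymm) (hKsymm : K.IsSymm) (hM : M.PosDef) (hK : K.PosDef)
    (y_d y_r : Fin n → ℝ) (a b α β : ℝ) (ha : a ≤ 0) (hb : 0 ≤ b) (hα : 0 < α) (hβ : 0 < β)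
    (y u : Fin n → ℝ) (hfeas : K.mulVec y = M.mulVec (u + y_r))
    (hbox : ∀ i, a ≤ u i ∧ u i ≤ b)
    (l p m : Fin n → ℝ) (hl : ∀ i, |l i| ≤ β) :
    (1 / 2) * ((y - y_d) ⬝ᵥ M.mulVec (y - y_d)) + (α / 2) * (u ⬝ᵥ M.mulVec u)
        + β * ∑ i, |M.mulVec u i| ≥
      -(1 / 2) * ((K.mulVec p - M.mulVec y_d) ⬝ᵥ M⁻¹.mulVec (K.mulVec p - M.mulVec y_d))
        - (1 / (2 * α)) * ((l + m - p) ⬝ᵥ M.mulVec (l + m - p))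
        - y_r ⬝ᵥ M.mulVec p
        - (∑ i, max (a * M.mulVec m i) (b * M.mulVec m i))
        + (1 / 2) * (y_d ⬝ᵥ M.mulVec y_d) := by
  have hMinvsymm : (M⁻¹).IsSymm := hM.inv.isHermitian
  have hcancel : ∀ x : Fin n → ℝ, M⁻¹.mulVec (M.mulVec x) = x := by
    intro x
    rw [Matrix.mulVec_mulVec, Matrix.nonsing_inv_mul M hM.det_pos.ne'.isUnit, Matrix.one_mulVec]
  set q : Fin n → ℝ := l + m - p with hq
  set v : Fin n → ℝ := M.mulVec (y - y_d) + K.mulVec p with hv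
  set w : Fin n → ℝ := α • u + q with hw
  -- expansion of v M⁻¹ v
  have e1 : v ⬝ᵥ M⁻¹.mulVec v
      = (y - y_d) ⬝ᵥ M.mulVec (y - y_d) + 2 * ((y - y_d) ⬝ᵥ K.mulVec p)
        + (K.mulVec p ⬝ᵥ M⁻¹.mulVec (K.mulVec p)) := by
    rw [hv]
    rw [Matrix.mulVec_add, dotProduct_add, add_dotProduct,
      add_dotProduct, hcancel]
    have c1 : M.mulVec (y - y_d) ⬝ᵥ M⁻¹.mulVec (K.mulVec p) = (y - y_d) ⬝ᵥ K.mulVec p := by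
      rw [symm_dot hMinvsymm, hcancel, dotProduct_comm]
    have c2 : M.mulVec (y - y_d) ⬝ᵥ (y - y_d) = (y - y_d) ⬝ᵥ M.mulVec (y - y_d) :=
      dotProduct_comm _ _
    have c3 : K.mulVec p ⬝ᵥ (y - y_d) = (y - y_d) ⬝ᵥ K.mulVec p :=
      dotProduct_comm _ _
    rw [c1, c2, c3]; ring
  -- expansion of the dual quadratic term
  have e3 : (K.mulVec p - M.mulVec y_d) ⬝ᵥ M⁻¹.mulVec (K.mulVec p - M.mulVec y_d)
      = (K.mulVec p ⬝ᵥ M⁻¹.mulVec (K.mulVec p)) - 2 * (y_d ⬝ᵥ K.mulVec p)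
        + y_d ⬝ᵥ M.mulVec y_d := by
    rw [Matrix.mulVec_sub, dotProduct_sub, sub_dotProduct,
      sub_dotProduct, hcancel]
    have c1 : K.mulVec p ⬝ᵥ y_d = y_d ⬝ᵥ K.mulVec p := dotProduct_comm _ _
    have c2 : M.mulVec y_d ⬝ᵥ M⁻¹.mulVec (K.mulVec p) = y_d ⬝ᵥ K.mulVec p := by
      rw [symm_dot hMinvsymm, hcancel, dotProduct_comm]
    have c3 : M.mulVec y_d ⬝ᵥ y_d = y_d ⬝ᵥ M.mulVec y_d := dotProduct_comm _ _
    rw [c1, c2, c3]; ring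
  -- feasibility
  have e4 : y ⬝ᵥ K.mulVec p = u ⬝ᵥ M.mulVec p + y_r ⬝ᵥ M.mulVec p := by
    rw [symm_dot hKsymm, hfeas, Matrix.mulVec_add, dotProduct_add,
      symm_dot hMsymm p u, symm_dot hMsymm p y_r]
  -- expansion of w M w, divided
  have e2 : (1 / (2 * α)) * (w ⬝ᵥ M.mulVec w)
      = (α / 2) * (u ⬝ᵥ M.mulVec u) + (u ⬝ᵥ M.mulVec l + u ⬝ᵥ M.mulVec m - u ⬝ᵥ M.mulVec p)
        + (1 / (2 * α)) * (q ⬝ᵥ M.mulVec q) := by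
    have expand : w ⬝ᵥ M.mulVec w
        = α * α * (u ⬝ᵥ M.mulVec u) + 2 * α * (u ⬝ᵥ M.mulVec q) + q ⬝ᵥ M.mulVec q := by
      rw [hw, Matrix.mulVec_add, dotProduct_add, add_dotProduct,
        add_dotProduct, Matrix.mulVec_smul, dotProduct_smul,
        smul_dotProduct, smul_dotProduct, dotProduct_smul,
        symm_dot hMsymm q u]
      simp [smul_eq_mul]; ring
    have equq : u ⬝ᵥ M.mulVec q = u ⬝ᵥ M.mulVec l + u ⬝ᵥ M.mulVec m - u ⬝ᵥ M.mulVec p := by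
      rw [hq, Matrix.mulVec_sub, Matrix.mulVec_add, dotProduct_sub,
        dotProduct_add]
    rw [expand, equq]; field_simp
  have hqpos : (0:ℝ) < 1 / (2 * α) := by positivity
  have h1 : 0 ≤ v ⬝ᵥ M⁻¹.mulVec v := psd_dot hM.inv.posSemidef v
  have h2 : 0 ≤ (1 / (2 * α)) * (w ⬝ᵥ M.mulVec w) :=
    mul_nonneg hqpos.le (psd_dot hM.posSemidef w)
  -- l bound
  have h3 : u ⬝ᵥ M.mulVec l ≤ β * ∑ i, |M.mulVec u i| := by
    rw [symm_dot hMsymm]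
    calc l ⬝ᵥ M.mulVec u = ∑ i, l i * M.mulVec u i := rfl
      _ ≤ ∑ i, β * |M.mulVec u i| := by
          refine Finset.sum_le_sum fun i _ => ?_
          calc l i * M.mulVec u i ≤ |l i * M.mulVec u i| := le_abs_self _
            _ = |l i| * |M.mulVec u i| := abs_mul _ _
            _ ≤ β * |M.mulVec u i| := by
                exact mul_le_mul_of_nonneg_right (hl i) (abs_nonneg _)
      _ = β * ∑ i, |M.mulVec u i| := by rw [Finset.mul_sum]
  -- box bound
  have h4 : u ⬝ᵥ M.mulVec m ≤ ∑ i, max (a * M.mulVec m i) (b * M.mulVec m i) := by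
    calc u ⬝ᵥ M.mulVec m = ∑ i, u i * M.mulVec m i := rfl
      _ ≤ ∑ i, max (a * M.mulVec m i) (b * M.mulVec m i) := by
          refine Finset.sum_le_sum fun i _ => ?_
          rcases le_or_gt 0 (M.mulVec m i) with h | h
          · exact le_max_of_le_right (mul_le_mul_of_nonneg_right (hbox i).2 h)
          · exact le_max_of_le_left (by nlinarith [(hbox i).1])
  -- combine: the key identity with e1, e2, e3, e4
  have key : (1 / 2) * (v ⬝ᵥ M⁻¹.mulVec v) + (1 / (2 * α)) * (w ⬝ᵥ M.mulVec w)
      = (1 / 2) * ((y - y_d) ⬝ᵥ M.mulVec (y - y_d)) + (α / 2) * (u ⬝ᵥ M.mulVec u)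
        + (1 / 2) * ((K.mulVec p - M.mulVec y_d) ⬝ᵥ M⁻¹.mulVec (K.mulVec p - M.mulVec y_d))
        + (1 / (2 * α)) * (q ⬝ᵥ M.mulVec q)
        + y_r ⬝ᵥ M.mulVec p - (1 / 2) * (y_d ⬝ᵥ M.mulVec y_d)
        + u ⬝ᵥ M.mulVec l + u ⬝ᵥ M.mulVec m := by
    have e5 : (y - y_d) ⬝ᵥ K.mulVec p = u ⬝ᵥ M.mulVec p + y_r ⬝ᵥ M.mulVec p
        - y_d ⬝ᵥ K.mulVec p := by
      rw [sub_dotProduct, e4]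
    rw [e1, e2, e3, e5]; ring
  linarith [key, h1, h2, h3, h4]
end

section
/- Let M and K be real symmetric positive definite n×n matrices, y_d, y_r ∈ ℝⁿ, a ≤ 0 ≤ b, and α, β > 0. Then strong duality holds between the discretized primal problem and its dual: min { ½‖y − y_d‖²_M + (α/2)‖u‖²_M + β‖Mu‖₁ : Ky = M(u + y_r), u ∈ [a,b]ⁿ } = sup { −½‖Kp − M y_d‖²_{M⁻¹} − (1/(2α))‖λ + μ − p‖²_M − y_rᵀMp − ∑_{i=1}^{n} max(a (Mμ)_i, b (Mμ)_i) + ½‖y_d‖²_M : p, μ ∈ ℝⁿ, λ ∈ ℝⁿ with |λ_i| ≤ β ∀i }, and the primal minimum is attained at a unique (y*, u*). -/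
open Matrix
open scoped BigOperators

/-- The primal objective `½‖y − y_d‖²_M + (α/2)‖u‖²_M + β‖Mu‖₁` of the discretized
sparse optimal control problem. -/
noncomputable def primalObj {n : ℕ} (M : Matrix (Fin n) (Fin n) ℝ)
    (y_d : Fin n → ℝ) (α β : ℝ) (y u : Fin n → ℝ) : ℝ :=
  (1 / 2) * ((y - y_d) ⬝ᵥ M.mulVec (y - y_d)) + (α / 2) * (u ⬝ᵥ M.mulVec u)
    + β * ∑ i, |M.mulVec u i|

/-- The dual objective (the negative of `Φ_h`) of the discretized sparse optimal control
problem, for dual variables `(λ, p, μ)` with `‖λ‖_∞ ≤ β`. -/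
noncomputable def dualObj {n : ℕ} (M K : Matrix (Fin n) (Fin n) ℝ)
    (y_d y_r : Fin n → ℝ) (a b α : ℝ) (l p m : Fin n → ℝ) : ℝ :=
  -(1 / 2) * ((K.mulVec p - M.mulVec y_d) ⬝ᵥ M⁻¹.mulVec (K.mulVec p - M.mulVec y_d))
    - (1 / (2 * α)) * ((l + m - p) ⬝ᵥ M.mulVec (l + m - p))
    - y_r ⬝ᵥ M.mulVec p
    - (∑ i, max (a * M.mulVec m i) (b * M.mulVec m i))
    + (1 / 2) * (y_d ⬝ᵥ M.mulVec y_d)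

open Set

/-! ### smoothing helpers -/

noncomputable def rho (ε t : ℝ) : ℝ := Real.sqrt (t^2 + ε^2)
noncomputable def rho' (ε t : ℝ) : ℝ := t / rho ε t

lemma rho_pos {ε : ℝ} (hε : 0 < ε) (t : ℝ) : 0 < rho ε t :=
  Real.sqrt_pos.2 (by positivity)

lemma rho_sq {ε : ℝ} (t : ℝ) : rho ε t * rho ε t = t^2 + ε^2 :=
  Real.mul_self_sqrt (by positivity)

lemma rho_ge_eps {ε : ℝ} (hε : 0 < ε) (t : ℝ) : ε ≤ rho ε t := by
  have h : ε = Real.sqrt (ε^2) := by rw [Real.sqrt_sq hε.le]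
  nth_rewrite 1 [h]
  exact Real.sqrt_le_sqrt (by nlinarith [sq_nonneg t])

lemma abs_le_rho (ε t : ℝ) : |t| ≤ rho ε t := by
  rw [show |t| = Real.sqrt (t^2) by rw [Real.sqrt_sq_eq_abs]]
  exact Real.sqrt_le_sqrt (by nlinarith [sq_nonneg ε])

lemma rho_mul_rho_ge {ε : ℝ} (t s : ℝ) : t * s + ε^2 ≤ rho ε t * rho ε s := by
  rcases le_or_gt (t * s + ε^2) 0 with h | h
  · exact h.trans (mul_nonneg (Real.sqrt_nonneg _) (Real.sqrt_nonneg _))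
  · have h2 : (t * s + ε^2)^2 ≤ (t^2 + ε^2) * (s^2 + ε^2) := by nlinarith [sq_nonneg (t - s)]
    calc t * s + ε^2 = Real.sqrt ((t*s+ε^2)^2) := by rw [Real.sqrt_sq h.le]
      _ ≤ Real.sqrt ((t^2 + ε^2) * (s^2 + ε^2)) := Real.sqrt_le_sqrt h2
      _ = rho ε t * rho ε s := Real.sqrt_mul (by positivity) _

lemma rho_grad {ε : ℝ} (hε : 0 < ε) (t s : ℝ) :
    rho ε t + rho' ε t * (s - t) ≤ rho ε s := by
  have hρ := rho_pos hε t
  have key : rho ε t * rho ε t + t * (s - t) ≤ rho ε s * rho ε t := by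
    rw [rho_sq]
    nlinarith [rho_mul_rho_ge (ε := ε) t s]
  have h2 : rho ε t + rho' ε t * (s - t) = (rho ε t * rho ε t + t * (s - t)) / rho ε t := by
    rw [rho']; field_simp
  rw [h2, div_le_iff₀ hρ]
  linarith [key]

lemma abs_rho'_le {ε : ℝ} (hε : 0 < ε) (t : ℝ) : |rho' ε t| ≤ 1 := by
  have hρ := rho_pos hε t
  rw [rho', abs_div, abs_of_pos hρ, div_le_one hρ]
  exact abs_le_rho ε t

lemma rho'_complement {ε : ℝ} (hε : 0 < ε) (t : ℝ) : |t| - rho' ε t * t ≤ ε := by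
  have hρ := rho_pos hε t
  have h1 : |t| - rho' ε t * t = (|t| * rho ε t - t^2) / rho ε t := by
    rw [rho']; field_simp
  rw [h1, div_le_iff₀ hρ]
  have h2 : |t| * rho ε t ≤ (t^2 + ε^2) := by
    calc |t| * rho ε t ≤ rho ε t * rho ε t :=
          mul_le_mul_of_nonneg_right (abs_le_rho ε t) hρ.le
      _ = t^2 + ε^2 := rho_sq t
  nlinarith [rho_ge_eps hε t, sq_nonneg t]

lemma continuous_rho (ε : ℝ) : Continuous (rho ε) := by
  unfold rho
  exact Real.continuous_sqrt.comp (by continuity)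

lemma continuous_rho' {ε : ℝ} (hε : 0 < ε) : Continuous (rho' ε) := by
  unfold rho' rho
  apply Continuous.div continuous_id
  · exact Real.continuous_sqrt.comp (by continuity)
  · intro t
    exact (Real.sqrt_pos.2 (by positivity)).ne'

/-! ### matrix helpers -/

section Helpers
variable {n : ℕ}

lemma symm_shift (A : Matrix (Fin n) (Fin n) ℝ) (hA : Aᵀ = A) (x w : Fin n → ℝ) :
    (A *ᵥ x) ⬝ᵥ w = x ⬝ᵥ (A *ᵥ w) := by
  rw [dotProduct_comm, dotProduct_mulVec, ← mulVec_transpose, hA, dotProduct_comm]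

lemma bf_comm (A : Matrix (Fin n) (Fin n) ℝ) (hA : Aᵀ = A) (x w : Fin n → ℝ) :
    x ⬝ᵥ (A *ᵥ w) = w ⬝ᵥ (A *ᵥ x) := by
  rw [← symm_shift A hA w x, dotProduct_comm]

lemma bf_nonneg {A : Matrix (Fin n) (Fin n) ℝ} (hA : A.PosDef) (x : Fin n → ℝ) :
    0 ≤ x ⬝ᵥ (A *ᵥ x) := by
  simpa using hA.posSemidef.dotProduct_mulVec_nonneg x

lemma bf_pos {A : Matrix (Fin n) (Fin n) ℝ} (hA : A.PosDef) {x : Fin n → ℝ} (hx : x ≠ 0) :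
    0 < x ⬝ᵥ (A *ᵥ x) := by
  simpa using hA.dotProduct_mulVec_pos hx

lemma inv_mulVec_mulVec {A : Matrix (Fin n) (Fin n) ℝ} (hA : IsUnit A.det) (x : Fin n → ℝ) :
    A⁻¹ *ᵥ (A *ᵥ x) = x := by
  rw [mulVec_mulVec, A.nonsing_inv_mul hA, one_mulVec]

lemma mulVec_inv_mulVec {A : Matrix (Fin n) (Fin n) ℝ} (hA : IsUnit A.det) (x : Fin n → ℝ) :
    A *ᵥ (A⁻¹ *ᵥ x) = x := by
  rw [mulVec_mulVec, A.mul_nonsing_inv hA, one_mulVec]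

lemma continuous_mulVec (A : Matrix (Fin n) (Fin n) ℝ) :
    Continuous fun u : Fin n → ℝ => A *ᵥ u := by
  refine continuous_pi fun i => ?_
  simp only [mulVec, dotProduct]
  exact continuous_finset_sum _ fun j _ => (continuous_const.mul (continuous_apply j))

lemma continuous_dot {f g : (Fin n → ℝ) → (Fin n → ℝ)} (hf : Continuous f) (hg : Continuous g) :
    Continuous fun u => f u ⬝ᵥ g u := by
  simp only [dotProduct]
  exact continuous_finset_sum _ fun j _ =>
    ((continuous_apply j).comp hf).mul ((continuous_apply j).comp hg)

lemma quad_expand (M : Matrix (Fin n) (Fin n) ℝ) (hMs : Mᵀ = M) (x h : Fin n → ℝ) (s : ℝ) :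
    (x + s • h) ⬝ᵥ M *ᵥ (x + s • h)
      = x ⬝ᵥ M *ᵥ x + 2*s*(h ⬝ᵥ M *ᵥ x) + s^2*(h ⬝ᵥ M *ᵥ h) := by
  have e : x ⬝ᵥ (M *ᵥ h) = h ⬝ᵥ (M *ᵥ x) := bf_comm M hMs x h
  simp only [mulVec_add, mulVec_smul, dotProduct_add, add_dotProduct, dotProduct_smul,
    smul_dotProduct, smul_eq_mul, e]
  ring

lemma quad_mid (M : Matrix (Fin n) (Fin n) ℝ) (hMs : Mᵀ = M) (x x' : Fin n → ℝ) :
    ((1/2:ℝ) • (x + x')) ⬝ᵥ M *ᵥ ((1/2:ℝ) • (x + x'))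
      = (1/2)*(x ⬝ᵥ M *ᵥ x) + (1/2)*(x' ⬝ᵥ M *ᵥ x')
        - (1/4)*((x - x') ⬝ᵥ M *ᵥ (x - x')) := by
  have e : x ⬝ᵥ (M *ᵥ x') = x' ⬝ᵥ (M *ᵥ x) := bf_comm M hMs x x'
  simp only [mulVec_add, mulVec_sub, mulVec_smul, dotProduct_add, dotProduct_sub,
    add_dotProduct, sub_dotProduct, dotProduct_smul, smul_dotProduct, smul_eq_mul, e]
  ring

lemma dot_le_beta_l1 {β : ℝ} (l w : Fin n → ℝ) (hl : ∀ i, |l i| ≤ β) :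
    l ⬝ᵥ w ≤ β * ∑ i, |w i| := by
  rw [dotProduct, Finset.mul_sum]
  refine Finset.sum_le_sum fun i _ => ?_
  calc l i * w i ≤ |l i * w i| := le_abs_self _
    _ = |l i| * |w i| := abs_mul _ _
    _ ≤ β * |w i| := mul_le_mul_of_nonneg_right (hl i) (abs_nonneg _)

lemma dot_le_sum_max {a b : ℝ} (u ν : Fin n → ℝ) (hu : ∀ i, a ≤ u i ∧ u i ≤ b) :
    u ⬝ᵥ ν ≤ ∑ i, max (a * ν i) (b * ν i) := by
  rw [dotProduct]
  refine Finset.sum_le_sum fun i _ => ?_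
  rcases le_or_gt 0 (ν i) with h | h
  · calc u i * ν i ≤ b * ν i := mul_le_mul_of_nonneg_right (hu i).2 h
      _ ≤ _ := le_max_right _ _
  · calc u i * ν i ≤ a * ν i := mul_le_mul_of_nonpos_right (hu i).1 h.le
      _ ≤ _ := le_max_left _ _

lemma gap_identity (M K : Matrix (Fin n) (Fin n) ℝ)
    (hMsymm : M.IsSymm) (hKsymm : K.IsSymm) (hM : M.PosDef)
    (y_d y_r : Fin n → ℝ) (a b α β : ℝ) (hα : α ≠ 0)
    (y u l p m : Fin n → ℝ) :
    primalObj M y_d α β y u - dualObj M K y_d y_r a b α l p m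
      = (1/2) * ((y - y_d + M⁻¹ *ᵥ (K *ᵥ p)) ⬝ᵥ M *ᵥ (y - y_d + M⁻¹ *ᵥ (K *ᵥ p)))
      + (1/(2*α)) * ((α • u + (l + m - p)) ⬝ᵥ M *ᵥ (α • u + (l + m - p)))
      + (β * (∑ i, |M.mulVec u i|) - l ⬝ᵥ M *ᵥ u)
      + ((∑ i, max (a * M.mulVec m i) (b * M.mulVec m i)) - u ⬝ᵥ M *ᵥ m)
      - p ⬝ᵥ (K *ᵥ y - M *ᵥ (u + y_r)) := by
  have hdet : IsUnit M.det := hM.det_pos.ne'.isUnit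
  have hMw : M *ᵥ (M⁻¹ *ᵥ (K *ᵥ p)) = K *ᵥ p := mulVec_inv_mulVec hdet _
  set w := M⁻¹ *ᵥ (K *ᵥ p) with hw
  have hdual : K *ᵥ p - M *ᵥ y_d = M *ᵥ (w - y_d) := by rw [mulVec_sub, hMw]
  have hinv : M⁻¹ *ᵥ (M *ᵥ (w - y_d)) = w - y_d := inv_mulVec_mulVec hdet _
  have hMs : Mᵀ = M := hMsymm
  have hKs : Kᵀ = K := hKsymm
  have e1 : (K *ᵥ p) ⬝ᵥ w = w ⬝ᵥ (K *ᵥ p) := dotProduct_comm _ _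
  have e2 : (M *ᵥ y_d) ⬝ᵥ w = w ⬝ᵥ (M *ᵥ y_d) := dotProduct_comm _ _
  have e3 : (K *ᵥ p) ⬝ᵥ y_d = y_d ⬝ᵥ (K *ᵥ p) := dotProduct_comm _ _
  have e4 : (M *ᵥ y_d) ⬝ᵥ y_d = y_d ⬝ᵥ (M *ᵥ y_d) := dotProduct_comm _ _
  have e5 : w ⬝ᵥ (M *ᵥ y) = y ⬝ᵥ (K *ᵥ p) := by rw [bf_comm M hMs, hMw]
  have e8 : p ⬝ᵥ (K *ᵥ y) = y ⬝ᵥ (K *ᵥ p) := bf_comm K hKs p y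
  have e9 : p ⬝ᵥ (M *ᵥ y_r) = y_r ⬝ᵥ (M *ᵥ p) := bf_comm M hMs p y_r
  have e11 : l ⬝ᵥ (M *ᵥ u) = u ⬝ᵥ (M *ᵥ l) := bf_comm M hMs l u
  have e12 : m ⬝ᵥ (M *ᵥ u) = u ⬝ᵥ (M *ᵥ m) := bf_comm M hMs m u
  have e13 : p ⬝ᵥ (M *ᵥ u) = u ⬝ᵥ (M *ᵥ p) := bf_comm M hMs p u
  rw [primalObj, dualObj, hdual, hinv]
  simp only [mulVec_add, mulVec_sub, mulVec_smul, dotProduct_add, dotProduct_sub,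
    add_dotProduct, sub_dotProduct, dotProduct_smul, smul_dotProduct, smul_eq_mul, hMw]
  simp only [e1, e2, e3, e4, e5, e8, e9, e11, e12, e13]
  field_simp
  simp only [mul_comm ((M *ᵥ m) _) b]
  ring

end Helpers


set_option maxHeartbeats 2000000 in
/-- Strong duality for the discretized sparse optimal control problem: the primal minimum
is attained at a unique pair `(y*, u*)`, and its value equals the supremum of the dual
objective over all `(λ, p, μ)` with `‖λ‖_∞ ≤ β`. -/
theorem stmt_18 {n : ℕ} (M K : Matrix (Fin n) (Fin n) ℝ)
    (hMsymm : M.IsSymm) (hKsymm : K.IsSymm) (hM : M.PosDef) (hK : K.PosDef)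
    (y_d y_r : Fin n → ℝ) (a b α β : ℝ) (ha : a ≤ 0) (hb : 0 ≤ b)
    (hα : 0 < α) (hβ : 0 < β) :
    ∃ ystar ustar : Fin n → ℝ,
      (K.mulVec ystar = M.mulVec (ustar + y_r) ∧ ∀ i, a ≤ ustar i ∧ ustar i ≤ b) ∧
      IsLeast {J : ℝ | ∃ y u : Fin n → ℝ,
          K.mulVec y = M.mulVec (u + y_r) ∧ (∀ i, a ≤ u i ∧ u i ≤ b) ∧
          J = primalObj M y_d α β y u}
        (primalObj M y_d α β ystar ustar) ∧
      IsLUB {D : ℝ | ∃ l p m : Fin n → ℝ,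
          (∀ i, |l i| ≤ β) ∧ D = dualObj M K y_d y_r a b α l p m}
        (primalObj M y_d α β ystar ustar) ∧
      (∀ y u : Fin n → ℝ, K.mulVec y = M.mulVec (u + y_r) → (∀ i, a ≤ u i ∧ u i ≤ b) →
        primalObj M y_d α β y u = primalObj M y_d α β ystar ustar →
        y = ystar ∧ u = ustar) := by
  have hMdet : IsUnit M.det := hM.det_pos.ne'.isUnit
  have hKdet : IsUnit K.det := hK.det_pos.ne'.isUnit
  have hMs : Mᵀ = M := hMsymm
  have hKs : Kᵀ = K := hKsymm
  have hKinvs : K⁻¹ᵀ = K⁻¹ := by rw [transpose_nonsing_inv, hKs]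
  set Box : Set (Fin n → ℝ) := {u | ∀ i, a ≤ u i ∧ u i ≤ b} with hBoxdef
  have hBoxCompact : IsCompact Box := by
    have hbe : Box = Set.pi Set.univ (fun _ : Fin n => Icc a b) := by
      ext u; simp [hBoxdef, Set.mem_pi, Set.mem_Icc, Pi.le_def, forall_and]
    rw [hbe]; exact isCompact_univ_pi fun _ => isCompact_Icc
  have hBoxNe : Box.Nonempty := ⟨0, fun i => ⟨by simpa using ha, by simpa using hb⟩⟩
  set Y : (Fin n → ℝ) → Fin n → ℝ := fun u => K⁻¹ *ᵥ (M *ᵥ (u + y_r)) with hYdef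
  have contY : Continuous Y := by
    rw [hYdef]
    exact (continuous_mulVec _).comp ((continuous_mulVec _).comp (continuous_id.add continuous_const))
  have hYfeas : ∀ u, K *ᵥ Y u = M *ᵥ (u + y_r) := fun u => mulVec_inv_mulVec hKdet _
  have hYuniq : ∀ y u, K *ᵥ y = M *ᵥ (u + y_r) → y = Y u := by
    intro y u h
    have h2 := congrArg (fun x => K⁻¹ *ᵥ x) h
    simpa [hYdef, inv_mulVec_mulVec hKdet] using h2
  set F : (Fin n → ℝ) → ℝ := fun u => primalObj M y_d α β (Y u) u with hFdef
  have contF : Continuous F := by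
    rw [hFdef]
    simp only [primalObj]
    refine Continuous.add (Continuous.add ?_ ?_) ?_
    · exact continuous_const.mul (continuous_dot (contY.sub continuous_const)
        ((continuous_mulVec M).comp (contY.sub continuous_const)))
    · exact continuous_const.mul (continuous_dot continuous_id
        ((continuous_mulVec M).comp continuous_id))
    · exact continuous_const.mul (continuous_finset_sum _ fun i _ =>
        ((continuous_apply i).comp (continuous_mulVec M)).abs)
  obtain ⟨ustar, hustarBox, hminOn⟩ := hBoxCompact.exists_isMinOn hBoxNe contF.continuousOn
  have hmin : ∀ u ∈ Box, F ustar ≤ F u := fun u hu => isMinOn_iff.mp hminOn u hu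
  refine ⟨Y ustar, ustar, ⟨hYfeas ustar, hustarBox⟩,
    ⟨⟨Y ustar, ustar, hYfeas ustar, hustarBox, rfl⟩, ?_⟩, ⟨?_, ?_⟩, ?_⟩
  · -- lower bound of primal set
    rintro J ⟨y, u, hc, hu, rfl⟩
    rw [hYuniq y u hc]
    exact hmin u hu
  · -- upper bound of dual set (weak duality)
    rintro D ⟨l, p, m, hl, rfl⟩
    have hgap := gap_identity M K hMsymm hKsymm hM y_d y_r a b α β hα.ne' (Y ustar) ustar l p m
    have hA := mul_nonneg (by norm_num : (0:ℝ) ≤ 1/2)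
      (bf_nonneg hM (Y ustar - y_d + M⁻¹ *ᵥ (K *ᵥ p)))
    have hB := mul_nonneg (by positivity : (0:ℝ) ≤ 1/(2*α))
      (bf_nonneg hM (α • ustar + (l + m - p)))
    have hC : l ⬝ᵥ (M *ᵥ ustar) ≤ β * ∑ i, |(M *ᵥ ustar) i| := dot_le_beta_l1 _ _ hl
    have hD : ustar ⬝ᵥ (M *ᵥ m) ≤ ∑ i, max (a * (M *ᵥ m) i) (b * (M *ᵥ m) i) :=
      dot_le_sum_max _ _ hustarBox
    have hE : p ⬝ᵥ (K *ᵥ (Y ustar) - M *ᵥ (ustar + y_r)) = 0 := by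
      rw [hYfeas, sub_self, dotProduct_zero]
    linarith [hgap, hA, hB, hC, hD, hE]
  · -- least upper bound
    intro c hc
    refine le_of_forall_pos_le_add fun ε hε => ?_
    have hnb0 : (0:ℝ) ≤ (n:ℝ) * β := mul_nonneg (Nat.cast_nonneg n) hβ.le
    have hnb1 : (0:ℝ) < (n:ℝ) * β + 1 := by linarith
    set δ : ℝ := ε / ((n:ℝ) * β + 1) with hδdef
    have hδ : 0 < δ := div_pos hε hnb1
    set Fs : (Fin n → ℝ) → ℝ := fun u => (1/2) * ((Y u - y_d) ⬝ᵥ M *ᵥ (Y u - y_d))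
      + (α/2) * (u ⬝ᵥ M *ᵥ u) + β * ∑ i, rho δ ((M *ᵥ u) i) with hFsdef
    have contFs : Continuous Fs := by
      rw [hFsdef]
      refine Continuous.add (Continuous.add ?_ ?_) ?_
      · exact continuous_const.mul (continuous_dot (contY.sub continuous_const)
          ((continuous_mulVec M).comp (contY.sub continuous_const)))
      · exact continuous_const.mul (continuous_dot continuous_id
          ((continuous_mulVec M).comp continuous_id))
      · exact continuous_const.mul (continuous_finset_sum _ fun i _ =>
          (continuous_rho δ).comp ((continuous_apply i).comp (continuous_mulVec M)))
    obtain ⟨v, hvBox, hvminOn⟩ := hBoxCompact.exists_isMinOn hBoxNe contFs.continuousOn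
    have hvmin : ∀ u ∈ Box, Fs v ≤ Fs u := fun u hu => isMinOn_iff.mp hvminOn u hu
    set z : Fin n → ℝ := Y v - y_d with hzdef
    set t : Fin n → ℝ := M *ᵥ v with htdef
    set r' : Fin n → ℝ := fun i => rho' δ (t i) with hr'def
    set l : Fin n → ℝ := β • r' with hldef
    set p : Fin n → ℝ := -(K⁻¹ *ᵥ (M *ᵥ z)) with hpdef
    set m : Fin n → ℝ := p - α • v - l with hmdef
    -- variational inequality
    have hVI : ∀ u ∈ Box, (M *ᵥ m) ⬝ᵥ (u - v) ≤ 0 := by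
      intro u hu
      set d : Fin n → ℝ := u - v with hddef
      set h : Fin n → ℝ := M *ᵥ d with hhdef
      set Td : Fin n → ℝ := K⁻¹ *ᵥ (M *ᵥ d) with hTddef
      set L : ℝ := Td ⬝ᵥ (M *ᵥ z) + α * (d ⬝ᵥ (M *ᵥ v)) with hLdef
      set Q : ℝ := (1/2) * (Td ⬝ᵥ (M *ᵥ Td)) + (α/2) * (d ⬝ᵥ (M *ᵥ d)) with hQdef
      have hmem : ∀ s ∈ Ioc (0:ℝ) 1, v + s • d ∈ Box := by
        intro s hs i
        have h1 := hvBox i; have h2 := hu i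
        have hco : (v + s • d) i = v i + s * (u i - v i) := by simp [hddef]
        rw [hco]
        constructor <;> nlinarith [hs.1, hs.2, h1.1, h1.2, h2.1, h2.2]
      have hexp : ∀ s : ℝ, Fs (v + s • d) = Fs v + s * L + s^2 * Q
          + β * ∑ i, (rho δ (t i + s * h i) - rho δ (t i)) := by
        intro s
        have hY2 : Y (v + s • d) - y_d = z + s • Td := by
          have hvd : v + s • d + y_r = (v + y_r) + s • d := by abel
          rw [hTddef, hzdef]
          simp only [hYdef, hvd, mulVec_add, mulVec_smul]
          abel
        have ht2 : ∀ i, (M *ᵥ (v + s • d)) i = t i + s * h i := by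
          intro i; simp [htdef, hhdef, mulVec_add, mulVec_smul]
        simp only [hFsdef]
        rw [hY2, quad_expand M hMs z Td s, quad_expand M hMs v d s,
          Finset.sum_congr rfl fun i _ => congrArg (rho δ) (ht2 i),
          Finset.sum_sub_distrib, hLdef, hQdef]
        ring
      have key1 : ∀ s ∈ Ioc (0:ℝ) 1,
          0 ≤ L + s * Q + β * ∑ i, rho' δ (t i + s * h i) * h i := by
        intro s hs
        have hmin2 := hvmin _ (hmem s hs)
        rw [hexp s] at hmin2
        have hsum : ∑ i, (rho δ (t i + s * h i) - rho δ (t i))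
            ≤ ∑ i, rho' δ (t i + s * h i) * (s * h i) := by
          refine Finset.sum_le_sum fun i _ => ?_
          have hg := rho_grad hδ (t i + s * h i) (t i)
          nlinarith [hg]
        have hb2 := mul_le_mul_of_nonneg_left hsum hβ.le
        have hsum2 : ∑ i, rho' δ (t i + s * h i) * (s * h i)
            = s * ∑ i, rho' δ (t i + s * h i) * h i := by
          rw [Finset.mul_sum]
          exact Finset.sum_congr rfl fun i _ => by ring
        rw [hsum2] at hb2
        have hc2 : 0 ≤ s * L + s^2 * Q + β * (s * ∑ i, rho' δ (t i + s * h i) * h i) := by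
          linarith [hmin2, hb2]
        by_contra hneg
        push_neg at hneg
        have hlt := mul_neg_of_pos_of_neg hs.1 hneg
        nlinarith [hc2, hlt]
      have contg : Continuous fun s : ℝ =>
          L + s * Q + β * ∑ i, rho' δ (t i + s * h i) * h i := by
        refine Continuous.add (continuous_const.add (continuous_id.mul continuous_const))
          (continuous_const.mul (continuous_finset_sum _ fun i _ => ?_))
        exact ((continuous_rho' hδ).comp
          (continuous_const.add (continuous_id.mul continuous_const))).mul continuous_const
      have htend := (contg.tendsto 0).mono_left (nhdsWithin_le_nhds (s := Ioi (0:ℝ)))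
      have hge : (0:ℝ) ≤ L + 0 * Q + β * ∑ i, rho' δ (t i + 0 * h i) * h i :=
        ge_of_tendsto htend (Filter.eventually_of_mem (Ioc_mem_nhdsGT zero_lt_one) key1)
      simp only [zero_mul, add_zero] at hge
      have hMm : M *ᵥ m = -(M *ᵥ (K⁻¹ *ᵥ (M *ᵥ z))) - α • (M *ᵥ v) - β • (M *ᵥ r') := by
        rw [hmdef, hldef, hpdef]
        simp only [mulVec_sub, mulVec_smul, mulVec_neg]
      have q1 : (M *ᵥ (K⁻¹ *ᵥ (M *ᵥ z))) ⬝ᵥ d = Td ⬝ᵥ (M *ᵥ z) := by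
        rw [symm_shift M hMs, symm_shift K⁻¹ hKinvs, ← hTddef, dotProduct_comm]
      have q2 : (M *ᵥ v) ⬝ᵥ d = d ⬝ᵥ (M *ᵥ v) := dotProduct_comm _ _
      have q3 : (M *ᵥ r') ⬝ᵥ d = ∑ i, rho' δ (t i) * h i := by
        rw [symm_shift M hMs, ← hhdef, dotProduct]
      have hfin : (M *ᵥ m) ⬝ᵥ (u - v)
          = -(Td ⬝ᵥ (M *ᵥ z) + α * (d ⬝ᵥ (M *ᵥ v)) + β * ∑ i, rho' δ (t i) * h i) := by
        rw [← hddef, hMm]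
        simp only [sub_dotProduct, neg_dotProduct, smul_dotProduct, smul_eq_mul]
        rw [q1, q2, q3]
        ring
      rw [hfin]
      rw [hLdef] at hge
      linarith
    -- componentwise complementarity
    have hcomp : ∀ i, max (a * (M *ᵥ m) i) (b * (M *ᵥ m) i) = v i * (M *ᵥ m) i := by
      intro i
      have hdot : ∀ c : ℝ, (M *ᵥ m) ⬝ᵥ (Function.update v i c - v) = (M *ᵥ m) i * (c - v i) := by
        intro c
        rw [dotProduct, Finset.sum_eq_single i]
        · simp
        · intro j _ hj
          simp [Function.update_of_ne hj]
        · intro hni; exact absurd (Finset.mem_univ i) hni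
      have hmema : Function.update v i a ∈ Box := by
        intro j
        rcases eq_or_ne j i with rfl | hj
        · simp only [Function.update_self]
          exact ⟨le_refl a, ha.trans hb⟩
        · simp only [Function.update_of_ne hj]
          exact hvBox j
      have hmemb : Function.update v i b ∈ Box := by
        intro j
        rcases eq_or_ne j i with rfl | hj
        · simp only [Function.update_self]
          exact ⟨ha.trans hb, le_refl b⟩
        · simp only [Function.update_of_ne hj]
          exact hvBox j
      have h1 := hVI _ hmema
      rw [hdot a] at h1
      have h2 := hVI _ hmemb
      rw [hdot b] at h2
      have hv := hvBox i
      apply le_antisymm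
      · apply max_le <;> nlinarith
      · rcases le_or_gt 0 ((M *ᵥ m) i) with hν | hν
        · calc v i * (M *ᵥ m) i ≤ b * (M *ᵥ m) i := mul_le_mul_of_nonneg_right hv.2 hν
            _ ≤ _ := le_max_right _ _
        · calc v i * (M *ᵥ m) i ≤ a * (M *ᵥ m) i := mul_le_mul_of_nonpos_right hv.1 hν.le
            _ ≤ _ := le_max_left _ _
    -- assemble the dual point value
    have hlbound : ∀ i, |l i| ≤ β := by
      intro i
      rw [hldef]
      simp only [Pi.smul_apply, smul_eq_mul, abs_mul, abs_of_pos hβ]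
      calc β * |r' i| ≤ β * 1 :=
            mul_le_mul_of_nonneg_left (by rw [hr'def]; exact abs_rho'_le hδ _) hβ.le
        _ = β := mul_one β
    have hgap := gap_identity M K hMsymm hKsymm hM y_d y_r a b α β hα.ne' (Y v) v l p m
    have hKp : K *ᵥ p = -(M *ᵥ z) := by
      rw [hpdef, mulVec_neg, mulVec_inv_mulVec hKdet]
    have hAvec : Y v - y_d + M⁻¹ *ᵥ (K *ᵥ p) = 0 := by
      rw [hKp, mulVec_neg, inv_mulVec_mulVec hMdet, ← hzdef]
      abel
    have hBvec : α • v + (l + m - p) = 0 := by rw [hmdef]; abel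
    have hE : p ⬝ᵥ (K *ᵥ (Y v) - M *ᵥ (v + y_r)) = 0 := by
      rw [hYfeas, sub_self, dotProduct_zero]
    have hD0 : (∑ i, max (a * (M *ᵥ m) i) (b * (M *ᵥ m) i)) - v ⬝ᵥ (M *ᵥ m) = 0 := by
      rw [Finset.sum_congr rfl fun i _ => hcomp i, dotProduct]
      exact sub_self _
    have hC : β * (∑ i, |t i|) - l ⬝ᵥ t ≤ (n:ℝ) * β * δ := by
      have hlv : l ⬝ᵥ t = ∑ i, β * (r' i * t i) := by
        rw [hldef, dotProduct]
        exact Finset.sum_congr rfl fun i _ => by simp [mul_assoc]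
      rw [hlv, Finset.mul_sum, ← Finset.sum_sub_distrib]
      calc ∑ i, (β * |t i| - β * (r' i * t i)) ≤ ∑ _i : Fin n, β * δ := by
            refine Finset.sum_le_sum fun i _ => ?_
            have hrc := rho'_complement hδ (t i)
            rw [hr'def]
            nlinarith [hβ.le, hrc]
        _ = (n:ℝ) * β * δ := by
            rw [Finset.sum_const, Finset.card_univ, Fintype.card_fin, nsmul_eq_mul]
            ring
    rw [hAvec, hBvec] at hgap
    simp only [zero_dotProduct, mul_zero] at hgap
    rw [← htdef] at hgap
    have hdmem : dualObj M K y_d y_r a b α l p m ≤ c := hc ⟨l, p, m, hlbound, rfl⟩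
    have hFv : F ustar ≤ F v := hmin v hvBox
    have hFveq : primalObj M y_d α β (Y v) v = F v := rfl
    have hδε : (n:ℝ) * β * δ ≤ ε := by
      have hq : δ * ((n:ℝ) * β + 1) = ε := div_mul_cancel₀ ε hnb1.ne'
      nlinarith [hδ.le]
    have hFu : primalObj M y_d α β (Y ustar) ustar = F ustar := rfl
    rw [hFu]
    rw [hFveq] at hgap
    linarith [hgap, hE, hD0, hC, hdmem, hFv, hδε]
  · -- uniqueness
    intro y u hcon hu hval
    have hy : y = Y u := hYuniq y u hcon
    by_cases huu : u = ustar
    · subst huu; exact ⟨by rw [hy], rfl⟩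
    · exfalso
      have hδne : u - ustar ≠ 0 := sub_ne_zero.mpr huu
      set mid : Fin n → ℝ := (1/2 : ℝ) • (u + ustar) with hmiddef
      have hmidBox : mid ∈ Box := by
        intro i
        have h1 := hu i; have h2 := hustarBox i
        have hco : mid i = (u i + ustar i)/2 := by
          rw [hmiddef]; simp; ring
        rw [hco]
        constructor <;> linarith
      have hmid1 : mid + y_r = (1/2:ℝ) • ((u + y_r) + (ustar + y_r)) := by
        funext i; rw [hmiddef]; simp; ring
      have hYmid : Y mid = (1/2:ℝ) • (Y u + Y ustar) := by
        have hym : Y mid = K⁻¹ *ᵥ (M *ᵥ (mid + y_r)) := rfl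
        rw [hym, hmid1]
        simp only [mulVec_smul, mulVec_add, hYdef]
      have hzmid : Y mid - y_d = (1/2:ℝ) • ((Y u - y_d) + (Y ustar - y_d)) := by
        rw [hYmid]; funext i; simp; ring
      have e1 : (Y mid - y_d) ⬝ᵥ M *ᵥ (Y mid - y_d)
          = (1/2)*((Y u - y_d) ⬝ᵥ M *ᵥ (Y u - y_d))
            + (1/2)*((Y ustar - y_d) ⬝ᵥ M *ᵥ (Y ustar - y_d))
            - (1/4)*(((Y u - y_d) - (Y ustar - y_d)) ⬝ᵥ M *ᵥ ((Y u - y_d) - (Y ustar - y_d))) := by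
        rw [hzmid]; exact quad_mid M hMs _ _
      have e2 : mid ⬝ᵥ M *ᵥ mid
          = (1/2)*(u ⬝ᵥ M *ᵥ u) + (1/2)*(ustar ⬝ᵥ M *ᵥ ustar)
            - (1/4)*((u - ustar) ⬝ᵥ M *ᵥ (u - ustar)) := by
        rw [hmiddef]; exact quad_mid M hMs u ustar
      have e3 : (∑ i, |(M *ᵥ mid) i|)
          ≤ (1/2) * ∑ i, |(M *ᵥ u) i| + (1/2) * ∑ i, |(M *ᵥ ustar) i| := by
        rw [Finset.mul_sum, Finset.mul_sum, ← Finset.sum_add_distrib]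
        refine Finset.sum_le_sum fun i _ => ?_
        have hco : (M *ᵥ mid) i = (1/2) * ((M *ᵥ u) i + (M *ᵥ ustar) i) := by
          rw [hmiddef]; simp [mulVec_smul, mulVec_add]; ring
        rw [hco, abs_mul, abs_of_pos (by norm_num : (0:ℝ) < 1/2)]
        have habs := abs_add_le ((M *ᵥ u) i) ((M *ᵥ ustar) i)
        linarith
      have pos1 : (0:ℝ) ≤ ((Y u - y_d) - (Y ustar - y_d)) ⬝ᵥ M *ᵥ ((Y u - y_d) - (Y ustar - y_d)) :=
        bf_nonneg hM _
      have pos2 : (0:ℝ) < (u - ustar) ⬝ᵥ M *ᵥ (u - ustar) := bf_pos hM hδne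
      have e3b := mul_le_mul_of_nonneg_left e3 hβ.le
      have hmid2 : F ustar ≤ F mid := hmin mid hmidBox
      have hvals : F u = F ustar := by
        rw [hy] at hval; exact hval
      have hposα : (0:ℝ) < (α/8) * ((u - ustar) ⬝ᵥ M *ᵥ (u - ustar)) :=
        mul_pos (by positivity) pos2
      have hFmid : F mid = (1/2)*((Y mid - y_d) ⬝ᵥ M *ᵥ (Y mid - y_d))
          + (α/2)*(mid ⬝ᵥ M *ᵥ mid) + β * ∑ i, |(M *ᵥ mid) i| := rfl
      have hFu2 : F u = (1/2)*((Y u - y_d) ⬝ᵥ M *ᵥ (Y u - y_d))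
          + (α/2)*(u ⬝ᵥ M *ᵥ u) + β * ∑ i, |(M *ᵥ u) i| := rfl
      have hFw2 : F ustar = (1/2)*((Y ustar - y_d) ⬝ᵥ M *ᵥ (Y ustar - y_d))
          + (α/2)*(ustar ⬝ᵥ M *ᵥ ustar) + β * ∑ i, |(M *ᵥ ustar) i| := rfl
      have e2' : (α/2) * (mid ⬝ᵥ M *ᵥ mid)
          = (α/4)*(u ⬝ᵥ M *ᵥ u) + (α/4)*(ustar ⬝ᵥ M *ᵥ ustar)
            - (α/8)*((u - ustar) ⬝ᵥ M *ᵥ (u - ustar)) := by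
        rw [e2]; ring
      nlinarith [hmid2, hvals, hposα, e1, e2', e3b, pos1, hFmid, hFu2, hFw2]
end
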